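/- arXiv:2303.06789 — 2 statements merged into one kernel-verified Lean document; each statement's English description precedes it below -/
import Mathlib

section
/- For every k ≥ 2, the k × k grid graph Grid(k) has treewidth exactly k. -/
/-- A tree decomposition of a simple graph `G` on vertex type `V`, with bags indexed by the
nodes of a finite tree `T` on `Fin n`: every vertex is in some bag, every edge has both
endpoints in some bag, and for each vertex the set of nodes whose bag contains it induces a
connected (hence subtree) subgraph of `T`. -/
def IsTreeDecomp {V : Type} (G : SimpleGraph V) {n : ℕ}
    (T : SimpleGraph (Fin n)) (bag : Fin n → Finset V) : Prop :=
  T.IsTree ∧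
  (∀ v : V, ∃ i, v ∈ bag i) ∧
  (∀ u v : V, G.Adj u v → ∃ i, u ∈ bag i ∧ v ∈ bag i) ∧
  (∀ v : V, (T.induce {i | v ∈ bag i}).Connected)

/-- The treewidth of `G`: the least `w` such that `G` admits a tree decomposition all of whose
bags have at most `w + 1` vertices (i.e. of width at most `w`). -/
noncomputable def treewidth {V : Type} (G : SimpleGraph V) : ℕ :=
  sInf {w : ℕ | ∃ (n : ℕ) (T : SimpleGraph (Fin n)) (bag : Fin n → Finset V),
    IsTreeDecomp G T bag ∧ ∀ i, (bag i).card ≤ w + 1}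

/-- The pathwidth of `G`: the least `w` such that `G` admits a tree decomposition along a path
all of whose bags have at most `w + 1` vertices (i.e. a path decomposition of width at most
`w`). -/
noncomputable def pathwidth {V : Type} (G : SimpleGraph V) : ℕ :=
  sInf {w : ℕ | ∃ (n : ℕ) (bag : Fin n → Finset V),
    IsTreeDecomp G (SimpleGraph.pathGraph n) bag ∧ ∀ i, (bag i).card ≤ w + 1}

/-- The `k × k` grid graph: vertices are pairs in `Fin k × Fin k`, two vertices being adjacent
if and only if they agree in one coordinate and differ by exactly `1` in the other. -/
def gridGraph (k : ℕ) : SimpleGraph (Fin k × Fin k) :=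
  SimpleGraph.fromRel (fun a b =>
    (a.1 = b.1 ∧ (a.2 : ℕ) + 1 = (b.2 : ℕ)) ∨ ((a.1 : ℕ) + 1 = (b.1 : ℕ) ∧ a.2 = b.2))

/-!
Upper bound: listed row by row, adjacent vertices of the grid are at most `k` apart, so the
windows of `k + 1` consecutive vertices form a path decomposition of width `k`.

Lower bound: some bag of any tree decomposition meets every set of a bramble (a family of
connected vertex sets any two of which meet or are joined by an edge). Otherwise every node of
the tree points to the neighbour leading towards a bramble set its bag misses; since a tree has
fewer edges than nodes, two adjacent nodes point at each other, and then the two bramble sets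
they miss cannot touch. In the `k × k` grid, the crosses (row `i` together with column `j`) of
the top-left `(k - 1) × (k - 1)` subgrid, the last row, and the last column without its corner
form a bramble. A set meeting all of them has `k - 1` vertices in the subgrid (else it misses a
whole row and a whole column there) and one vertex in each of the two other sets.
-/

namespace SimpleGraph

variable {V W : Type*}

theorem Connected.induce_image {G : SimpleGraph V} {H : SimpleGraph W} (f : G →g H) {s : Set V}
    (hs : (G.induce s).Connected) : (H.induce (f '' s)).Connected :=
  hs.map (⟨fun x => ⟨f x, Set.mem_image_of_mem f x.2⟩, fun h => f.map_adj h⟩ :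
      G.induce s →g H.induce (f '' s)) (by rintro ⟨_, x, hx, rfl⟩; exact ⟨⟨x, hx⟩, rfl⟩)

theorem Walk.reachable_deleteIncidenceSet {G : SimpleGraph V} {x u v : V} (p : G.Walk u v)
    (hx : x ∉ p.support) : (G.deleteIncidenceSet x).Reachable u v := by
  induction p with
  | nil => rfl
  | cons h p ih =>
    rw [Walk.support_cons, List.mem_cons, not_or] at hx
    refine Adj.reachable (deleteIncidenceSet_adj.2 ⟨h, Ne.symm hx.1, ?_⟩) |>.trans (ih hx.2)
    rintro rfl
    exact hx.2 p.start_mem_support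

theorem pathGraph_isBridge {n : ℕ} {u v : Fin n} (h : (u : ℕ) + 1 = v) :
    (pathGraph n).IsBridge s(u, v) := by
  suffices ∀ x, ((pathGraph n).deleteEdges {s(u, v)}).Reachable u x → x ≤ u by
    exact fun huv => (this v huv).not_gt (Fin.lt_def.2 (by omega))
  simp only [reachable_iff_reflTransGen]
  intro x hx
  induction hx with
  | refl => exact le_rfl
  | tail _ hadj ih =>
    simp only [deleteEdges_adj, pathGraph_adj, Set.mem_singleton_iff, Sym2.eq_iff, Fin.ext_iff,
      Fin.le_def] at hadj ih ⊢
    omega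

theorem pathGraph_isAcyclic (n : ℕ) : (pathGraph n).IsAcyclic := by
  refine isAcyclic_iff_forall_adj_isBridge.2 fun u v huv => ?_
  rcases pathGraph_adj.1 huv with h | h
  · exact pathGraph_isBridge h
  · exact Sym2.eq_swap ▸ pathGraph_isBridge h

theorem pathGraph_isTree (n : ℕ) [NeZero n] : (pathGraph n).IsTree :=
  ⟨⟨pathGraph_preconnected n⟩, pathGraph_isAcyclic n⟩

theorem pathGraph_induce_connected {n : ℕ} {s : Set (Fin n)} (hs : s.OrdConnected)
    (hne : s.Nonempty) : ((pathGraph n).induce s).Connected := by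
  have key : ∀ (d : ℕ) (x y : Fin n) (hx : x ∈ s) (hy : y ∈ s), (y : ℕ) = x + d →
      ((pathGraph n).induce s).Reachable ⟨x, hx⟩ ⟨y, hy⟩ := by
    intro d
    induction d with
    | zero =>
      intro x y hx hy h
      obtain rfl : x = y := Fin.ext h.symm
      rfl
    | succ d ih =>
      intro x y hx hy h
      let z : Fin n := ⟨x + 1, by omega⟩
      have hz : z ∈ s := hs.out hx hy ⟨Fin.le_def.2 (Nat.le_succ _), Fin.le_def.2 (by
        change (x : ℕ) + 1 ≤ y
        omega)⟩
      have hxz : ((pathGraph n).induce s).Adj ⟨x, hx⟩ ⟨z, hz⟩ := pathGraph_adj.2 (Or.inl rfl)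
      exact hxz.reachable.trans (ih z y hz hy (by change (y : ℕ) = x + 1 + d; omega))
  have := hne.to_subtype
  refine ⟨fun ⟨x, hx⟩ ⟨y, hy⟩ => ?_⟩
  rcases le_total x y with h | h
  · exact key (y - x) x y hx hy (by rw [Fin.le_def] at h; omega)
  · exact (key (x - y) y x hy hx (by rw [Fin.le_def] at h; omega)).symm

theorem connected_induce_singleton_prod {G : SimpleGraph V} {H : SimpleGraph W} (a : V)
    {t : Set W} (ht : (H.induce t).Connected) : ((G □ H).induce ({a} ×ˢ t)).Connected := by
  rw [Set.singleton_prod]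
  exact ht.induce_image (boxProdRight G H a).toHom

theorem connected_induce_prod_singleton {G : SimpleGraph V} {H : SimpleGraph W} {s : Set V}
    (b : W) (hs : (G.induce s).Connected) : ((G □ H).induce (s ×ˢ {b})).Connected := by
  rw [Set.prod_singleton]
  exact hs.induce_image (boxProdLeft G H b).toHom

def Touches (G : SimpleGraph V) (B C : Set V) : Prop :=
  (B ∩ C).Nonempty ∨ ∃ u ∈ B, ∃ v ∈ C, G.Adj u v

theorem Touches.symm {G : SimpleGraph V} {B C : Set V} (h : G.Touches B C) : G.Touches C B := by
  rcases h with h | ⟨u, hu, v, hv, huv⟩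
  · exact Or.inl (Set.inter_comm B C ▸ h)
  · exact Or.inr ⟨v, hv, u, hu, huv.symm⟩

structure IsBramble (G : SimpleGraph V) (𝓑 : Set (Set V)) : Prop where
  connected : ∀ B ∈ 𝓑, (G.induce B).Connected
  touches : ∀ B ∈ 𝓑, ∀ C ∈ 𝓑, G.Touches B C

end SimpleGraph

open SimpleGraph

section TreeDecomposition

variable {V : Type} {G : SimpleGraph V} {n : ℕ} {T : SimpleGraph (Fin n)} {bag : Fin n → Finset V}

theorem IsTreeDecomp.reachable_of_mem_bag (hT : IsTreeDecomp G T bag) {t i j : Fin n} {v : V}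
    (ht : v ∉ bag t) (hi : v ∈ bag i) (hj : v ∈ bag j) :
    (T.deleteIncidenceSet t).Reachable i j := by
  obtain ⟨-, -, -, hsubtree⟩ := hT
  have hconn := hsubtree v
  rw [← T.induce_deleteIncidenceSet_of_notMem (s := {i | v ∈ bag i}) ht] at hconn
  exact (hconn.preconnected ⟨i, hi⟩ ⟨j, hj⟩).map (Embedding.induce _).toHom

theorem IsTreeDecomp.reachable_of_preconnected (hT : IsTreeDecomp G T bag) {t : Fin n}
    {B : Set V} (hB : (G.induce B).Preconnected) (hBt : ∀ v ∈ B, v ∉ bag t) {u v : V}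
    (hu : u ∈ B) (hv : v ∈ B) {i j : Fin n} (hi : u ∈ bag i) (hj : v ∈ bag j) :
    (T.deleteIncidenceSet t).Reachable i j := by
  suffices ∀ x y : B, (G.induce B).Reachable x y → ∀ i j, x.1 ∈ bag i → y.1 ∈ bag j →
      (T.deleteIncidenceSet t).Reachable i j from
    this ⟨u, hu⟩ ⟨v, hv⟩ (hB _ _) i j hi hj
  have ⟨_, _, hedge, _⟩ := hT
  rintro x y ⟨p⟩
  induction p with
  | @nil x => exact fun i j hi hj => hT.reachable_of_mem_bag (hBt _ x.2) hi hj
  | @cons x y z hxy p ih =>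
    intro i j hi hj
    obtain ⟨m, hxm, hym⟩ := hedge _ _ hxy
    exact (hT.reachable_of_mem_bag (hBt _ x.2) hi hxm).trans (ih _ _ hym hj)

theorem IsTreeDecomp.exists_adj_forall_reachable (hT : IsTreeDecomp G T bag) {t : Fin n}
    {B : Set V} (hB : (G.induce B).Connected) (hBt : ∀ v ∈ B, v ∉ bag t) :
    ∃ s, T.Adj t s ∧ ∀ j, (∃ v ∈ B, v ∈ bag j) → (T.deleteIncidenceSet t).Reachable s j := by
  have ⟨htree, hcover, _, _⟩ := hT
  obtain ⟨⟨u, hu⟩⟩ := hB.nonempty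
  obtain ⟨i, hi⟩ := hcover u
  have hti : t ≠ i := by
    rintro rfl
    exact hBt u hu hi
  obtain ⟨p⟩ := htree.connected.preconnected t i
  obtain ⟨s, hts, q, hq⟩ := p.bypass.exists_eq_cons_of_ne hti
  have hpath := p.bypass_isPath
  rw [hq, Walk.cons_isPath_iff] at hpath
  refine ⟨s, hts, fun j ⟨v, hv, hvj⟩ => ?_⟩
  exact (q.reachable_deleteIncidenceSet hpath.2).trans
    (hT.reachable_of_preconnected hB.preconnected hBt hu hv hi hvj)

theorem IsTreeDecomp.exists_bag_meets_of_touches (hT : IsTreeDecomp G T bag) {B C : Set V}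
    (h : G.Touches B C) : ∃ i, (∃ v ∈ B, v ∈ bag i) ∧ ∃ v ∈ C, v ∈ bag i := by
  obtain ⟨-, hcover, hedge, -⟩ := hT
  rcases h with ⟨v, hvB, hvC⟩ | ⟨u, hu, v, hv, huv⟩
  · obtain ⟨i, hi⟩ := hcover v
    exact ⟨i, ⟨v, hvB, hi⟩, v, hvC, hi⟩
  · obtain ⟨i, hui, hvi⟩ := hedge u v huv
    exact ⟨i, ⟨u, hu, hui⟩, v, hv, hvi⟩

theorem SimpleGraph.IsBramble.exists_bag_meets_all {𝓑 : Set (Set V)} (h𝓑 : G.IsBramble 𝓑)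
    (hT : IsTreeDecomp G T bag) : ∃ i, ∀ B ∈ 𝓑, ∃ v ∈ B, v ∈ bag i := by
  classical
  have htree := hT.1
  by_contra! hmiss
  choose B hB hBmiss using hmiss
  choose s hs hreach using fun t =>
    hT.exists_adj_forall_reachable (h𝓑.connected _ (hB t)) (hBmiss t)
  -- `n` nodes point along only `n - 1` edges, so two adjacent nodes point at each other.
  obtain ⟨t, -, t', -, htt', heq⟩ := Finset.exists_ne_map_eq_of_card_lt_of_maps_to
    (s := Finset.univ) (t := T.edgeFinset) (f := fun t => s(t, s t))
    (by rw [Finset.card_univ, ← htree.card_edgeFinset]; omega)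
    (fun t _ => mem_edgeFinset.2 (hs t))
  obtain ⟨rfl, -⟩ | ⟨h1, h2⟩ := Sym2.eq_iff.1 heq
  · exact htt' rfl
  obtain ⟨i, hi, hi'⟩ := hT.exists_bag_meets_of_touches (h𝓑.touches _ (hB t) _ (hB t'))
  have hadj : T.Adj t t' := h2 ▸ hs t
  have r : (T.deleteIncidenceSet t).Reachable t' i := h2 ▸ hreach t i hi
  have r' : (T.deleteIncidenceSet t').Reachable t i := h1 ▸ hreach t' i hi'
  -- `t` and `t'` both reach `i` without using the edge `tt'`, so it is not a bridge of the tree.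
  refine isBridge_iff.1 (isAcyclic_iff_forall_adj_isBridge.1 htree.isAcyclic hadj)
    ((r'.mono ?_).trans (r.mono ?_).symm)
  · exact deleteEdges_anti (Set.singleton_subset_iff.2 (T.mk'_mem_incidenceSet_right_iff.2 hadj))
  · exact deleteEdges_anti (Set.singleton_subset_iff.2 (T.mk'_mem_incidenceSet_left_iff.2 hadj))

theorem treewidth_le_of_isTreeDecomp {w : ℕ} (hT : IsTreeDecomp G T bag)
    (hbag : ∀ i, (bag i).card ≤ w + 1) : treewidth G ≤ w :=
  Nat.sInf_le ⟨n, T, bag, hT, hbag⟩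

end TreeDecomposition

section Window

variable {V : Type} [Fintype V] {G : SimpleGraph V} {n w : ℕ}

def windowBag (f : V → Fin n) (w : ℕ) (t : Fin n) : Finset V :=
  Finset.univ.filter fun v => (t : ℕ) ≤ f v ∧ (f v : ℕ) ≤ t + w

@[simp]
theorem mem_windowBag {f : V → Fin n} {t : Fin n} {v : V} :
    v ∈ windowBag f w t ↔ (t : ℕ) ≤ f v ∧ (f v : ℕ) ≤ t + w := by
  simp [windowBag]

theorem card_windowBag_le {f : V → Fin n} (hf : Function.Injective f) (t : Fin n) :
    (windowBag f w t).card ≤ w + 1 := by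
  have := Finset.card_le_card_of_injOn (fun v => (f v : ℕ)) (s := windowBag f w t)
    (t := Finset.Icc (t : ℕ) (t + w)) (fun v hv => Finset.mem_Icc.2 (mem_windowBag.1 hv))
    (fun a _ b _ h => hf (Fin.ext h))
  rw [Nat.card_Icc] at this
  omega

theorem isTreeDecomp_windowBag [NeZero n] (f : V → Fin n)
    (hf : ∀ u v, G.Adj u v → (f u : ℕ) ≤ f v + w) :
    IsTreeDecomp G (pathGraph n) (windowBag f w) := by
  refine ⟨pathGraph_isTree n, fun v => ⟨f v, by simp⟩, fun u v huv => ?_, fun v => ?_⟩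
  · have := hf u v huv
    have := hf v u huv.symm
    rcases le_total (f u : ℕ) (f v) with h | h
    · exact ⟨f u, mem_windowBag.2 (by omega), mem_windowBag.2 (by omega)⟩
    · exact ⟨f v, mem_windowBag.2 (by omega), mem_windowBag.2 (by omega)⟩
  · refine pathGraph_induce_connected ⟨fun x hx y hy z hz => ?_⟩ ⟨f v, by simp⟩
    simp only [Set.mem_Icc, Fin.le_def] at hz
    simp only [Set.mem_ofPred_eq, mem_windowBag] at hx hy ⊢
    omega

theorem treewidth_le_of_forall_adj_le [NeZero n] {f : V → Fin n} (hf : Function.Injective f)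
    (hw : ∀ u v, G.Adj u v → (f u : ℕ) ≤ f v + w) : treewidth G ≤ w :=
  treewidth_le_of_isTreeDecomp (isTreeDecomp_windowBag f hw) (card_windowBag_le hf)

theorem le_treewidth_of_isBramble {𝓑 : Set (Set V)} (h𝓑 : G.IsBramble 𝓑) {m : ℕ}
    (horder : ∀ S : Finset V, (∀ B ∈ 𝓑, ∃ v ∈ B, v ∈ S) → m + 1 ≤ S.card) :
    m ≤ treewidth G := by
  let f : V → Fin (Fintype.card V + 1) := Fin.castSucc ∘ Fintype.equivFin V
  refine le_csInf ⟨_, _, _, _, isTreeDecomp_windowBag f (w := Fintype.card V) (fun u _ _ => ?_),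
    card_windowBag_le (Fin.castSucc_injective _ |>.comp (Fintype.equivFin V).injective)⟩ ?_
  · simp only [f, Function.comp_apply, Fin.val_castSucc]
    omega
  rintro w ⟨n, T, bag, hT, hbag⟩
  obtain ⟨i, hi⟩ := h𝓑.exists_bag_meets_all hT
  exact Nat.le_of_succ_le_succ ((horder _ hi).trans (hbag i))

end Window

theorem gridGraph_eq_boxProd (k : ℕ) : gridGraph k = pathGraph k □ pathGraph k := by
  ext ⟨a, b⟩ ⟨c, d⟩
  simp only [gridGraph, fromRel_adj, boxProd_adj, pathGraph_adj, ne_eq, Prod.mk.injEq, Fin.ext_iff]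
  omega

theorem finProdFinEquiv_le_add_of_gridGraph_adj {k : ℕ} {u v : Fin k × Fin k} (h : (gridGraph k).Adj u v) :
    (finProdFinEquiv u : ℕ) ≤ finProdFinEquiv v + k := by
  rw [gridGraph_eq_boxProd, boxProd_adj, pathGraph_adj, pathGraph_adj] at h
  simp only [finProdFinEquiv_apply_val]
  rcases h with ⟨h | h, h'⟩ | ⟨h | h, h'⟩ <;> simp only [h', ← h, Nat.mul_succ] <;> omega

theorem treewidth_gridGraph_le (k : ℕ) [NeZero k] : treewidth (gridGraph k) ≤ k :=
  treewidth_le_of_forall_adj_le finProdFinEquiv.injective fun _ _ => finProdFinEquiv_le_add_of_gridGraph_adj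

section GridBramble

variable (n : ℕ)

def gridCross (i j : Fin (n + 2)) : Set (Fin (n + 2) × Fin (n + 2)) :=
  {i} ×ˢ Set.Iio (Fin.last (n + 1)) ∪ Set.Iio (Fin.last (n + 1)) ×ˢ {j}

def gridBramble : Set (Set (Fin (n + 2) × Fin (n + 2))) :=
  insert ({Fin.last (n + 1)} ×ˢ Set.univ) <|
    insert (Set.Iio (Fin.last (n + 1)) ×ˢ {Fin.last (n + 1)}) <|
      {C | ∃ i < Fin.last (n + 1), ∃ j < Fin.last (n + 1), C = gridCross n i j}

theorem connected_of_mem_gridBramble {B : Set (Fin (n + 2) × Fin (n + 2))}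
    (hB : B ∈ gridBramble n) : ((gridGraph (n + 2)).induce B).Connected := by
  have hI : ((pathGraph (n + 2)).induce (Set.Iio (Fin.last (n + 1)))).Connected :=
    pathGraph_induce_connected Set.ordConnected_Iio ⟨0, Fin.last_pos⟩
  rw [gridGraph_eq_boxProd]
  rcases hB with rfl | rfl | ⟨i, hi, j, hj, rfl⟩
  · exact connected_induce_singleton_prod _
      (pathGraph_induce_connected Set.ordConnected_univ Set.univ_nonempty)
  · exact connected_induce_prod_singleton _ hI
  · exact induce_union_connected (connected_induce_singleton_prod i hI).preconnected
      (connected_induce_prod_singleton j hI).preconnected ⟨(i, j), by simp [hi, hj]⟩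

theorem touches_of_mem_gridBramble {B C : Set (Fin (n + 2) × Fin (n + 2))}
    (hB : B ∈ gridBramble n) (hC : C ∈ gridBramble n) : (gridGraph (n + 2)).Touches B C := by
  set p := (Fin.last n).castSucc
  have hp : p < Fin.last (n + 1) := Fin.castSucc_lt_last _
  have hp_adj : (pathGraph (n + 2)).Adj (Fin.last (n + 1)) p :=
    pathGraph_adj.2 (Or.inr (by simp [p]))
  rw [gridGraph_eq_boxProd]
  have row_col : (pathGraph (n + 2) □ pathGraph (n + 2)).Touches
      ({Fin.last (n + 1)} ×ˢ Set.univ) (Set.Iio (Fin.last (n + 1)) ×ˢ {Fin.last (n + 1)}) :=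
    Or.inr ⟨(Fin.last _, Fin.last _), by simp, (p, Fin.last _), by simp [hp],
      boxProd_adj_left.2 hp_adj⟩
  have row_cross : ∀ i j, j < Fin.last (n + 1) → (pathGraph (n + 2) □ pathGraph (n + 2)).Touches
      ({Fin.last (n + 1)} ×ˢ Set.univ) (gridCross n i j) := fun i j hj =>
    Or.inr ⟨(_, j), by simp, (p, j), by simp [gridCross, hp, hj], boxProd_adj_left.2 hp_adj⟩
  have col_cross : ∀ i j, i < Fin.last (n + 1) → (pathGraph (n + 2) □ pathGraph (n + 2)).Touches
      (Set.Iio (Fin.last (n + 1)) ×ˢ {Fin.last (n + 1)}) (gridCross n i j) := fun i j hi =>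
    Or.inr ⟨(i, _), by simp [hi], (i, p), by simp [gridCross, hp, hi], boxProd_adj_right.2 hp_adj⟩
  rcases hB with rfl | rfl | ⟨i, hi, j, hj, rfl⟩ <;>
    rcases hC with rfl | rfl | ⟨i', hi', j', hj', rfl⟩
  · exact Or.inl ⟨(Fin.last _, 0), by simp⟩
  · exact row_col
  · exact row_cross i' j' hj'
  · exact row_col.symm
  · exact Or.inl ⟨(0, Fin.last _), by simp [Fin.last_pos]⟩
  · exact col_cross i' j' hi'
  · exact (row_cross i j hj).symm
  · exact (col_cross i j hi).symm
  · exact Or.inl ⟨(i, j'), by simp [gridCross, hi, hj']⟩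

theorem card_le_of_meets_gridBramble (S : Finset (Fin (n + 2) × Fin (n + 2)))
    (hS : ∀ B ∈ gridBramble n, ∃ v ∈ B, v ∈ S) : n + 3 ≤ S.card := by
  classical
  set X := S.filter fun v => v.1 < Fin.last (n + 1) ∧ v.2 < Fin.last (n + 1)
  have hX : n + 1 ≤ X.card := by
    by_contra! hlt
    have hfew : ∀ g : Fin (n + 2) × Fin (n + 2) → Fin (n + 2),
        ∃ i < Fin.last (n + 1), i ∉ X.image g := by
      intro g
      obtain ⟨i, hi, hiX⟩ := Finset.exists_mem_notMem_of_card_lt_card (s := X.image g)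
        (t := Finset.Iio (Fin.last (n + 1)))
        (by rw [Fin.card_Iio, Fin.val_last]; exact X.card_image_le.trans_lt hlt)
      exact ⟨i, Finset.mem_Iio.1 hi, hiX⟩
    obtain ⟨i, hi, hiX⟩ := hfew Prod.fst
    obtain ⟨j, hj, hjX⟩ := hfew Prod.snd
    obtain ⟨v, hv, hvS⟩ :=
      hS (gridCross n i j) (Set.mem_insert_of_mem _ (Set.mem_insert_of_mem _ ⟨i, hi, j, hj, rfl⟩))
    rcases hv with ⟨rfl, hv2⟩ | ⟨hv1, rfl⟩
    · exact hiX (Finset.mem_image_of_mem _ (Finset.mem_filter.2 ⟨hvS, hi, hv2⟩))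
    · exact hjX (Finset.mem_image_of_mem _ (Finset.mem_filter.2 ⟨hvS, hv1, hj⟩))
  obtain ⟨r, hr, hrS⟩ := hS _ (Set.mem_insert _ _)
  obtain ⟨c, hc, hcS⟩ := hS _ (Set.mem_insert_of_mem _ (Set.mem_insert _ _))
  simp only [Set.mem_prod, Set.mem_singleton_iff, Set.mem_Iio] at hr hc
  have hrc : r ≠ c := fun h => hc.1.ne (h ▸ hr.1)
  have hrX : r ∉ X := by simp [X, hr.1]
  have hcX : c ∉ X := by simp [X, hc.2]
  calc n + 3 ≤ (insert r (insert c X)).card := by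
        rw [Finset.card_insert_of_notMem (by simp [hrc, hrX]), Finset.card_insert_of_notMem hcX]
        omega
    _ ≤ S.card := Finset.card_le_card (by
        simp [Finset.insert_subset_iff, hrS, hcS, X, Finset.filter_subset])

theorem le_treewidth_gridGraph : n + 2 ≤ treewidth (gridGraph (n + 2)) :=
  le_treewidth_of_isBramble ⟨fun _ => connected_of_mem_gridBramble n,
    fun _ hB _ hC => touches_of_mem_gridBramble n hB hC⟩ (card_le_of_meets_gridBramble n)

end GridBramble

/-- For every `k ≥ 2`, the `k × k` grid graph has treewidth exactly `k`. -/
theorem treewidth_gridGraph (k : ℕ) (hk : 2 ≤ k) : treewidth (gridGraph k) = k := by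
  obtain ⟨n, rfl⟩ := Nat.exists_eq_add_of_le' hk
  exact le_antisymm (treewidth_gridGraph_le _) (le_treewidth_gridGraph n)
end

section
/- There exists a sequence of finite simple graphs (G_h)_{h ∈ ℕ} of uniformly bounded treewidth but unbounded pathwidth: namely, the complete binary trees T_h satisfy tw(T_h) ≤ 1 for all h, while pw(T_h) → ∞ as h → ∞. In particular, for every c ∈ ℕ there exists a finite tree T with tw(T) ≤ 1 and pw(T) > c. -/
/-- The complete binary tree of height `h`, as a simple graph: vertices are the binary strings
of length at most `h` (the root is the empty string, with `2 ^ (h + 1) - 1` vertices in total),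
and each vertex `l` of length less than `h` is adjacent to its two children `x :: l`. -/
def completeBinaryTree (h : ℕ) : SimpleGraph {l : List Bool // l.length ≤ h} :=
  SimpleGraph.fromRel (fun a b => ∃ x : Bool, (b : List Bool) = x :: (a : List Bool))

/-!
A finite tree has treewidth at most one: index the bags `{v, parent v}` by the tree itself.

For the pathwidth, `T (h + 2)` contains four disjoint copies of `T h` (the subtrees two levels
below the root), and each of them has a connected complement. In an optimal path decomposition
of `T (h + 2)` every copy has a bag holding more than `pw (T h)` of its vertices; for a copy whose
bag lies between those of two other copies, the connected complement meets both outer bags and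
hence, by the interval property of path decompositions, the middle one as well. So
`pw (T h) + 1 ≤ pw (T (h + 2))`, and `pw (T h) ≥ h / 2`.
-/

open Finset Function

namespace SimpleGraph

variable {V : Type} {G : SimpleGraph V}

theorem isAcyclic_of_unique_lower_neighbor {α : Type} [LinearOrder α] (f : V → α)
    (hne : ∀ u v, G.Adj u v → f u ≠ f v)
    (huniq : ∀ u v w, G.Adj u v → G.Adj u w → f v < f u → f w < f u → v = w) :
    G.IsAcyclic := by
  classical
  intro a c hc
  obtain ⟨m, hm, hmax⟩ := c.support.toFinset.exists_max_image f ⟨a, by simp⟩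
  rw [List.mem_toFinset] at hm
  -- Rotated to start at a vertex of maximal `f`, the cycle has two distinct lower neighbours there.
  set d := c.rotate m hm
  have hd : d.IsCycle := hc.rotate hm
  have hmem : ∀ i, d.getVert i ∈ c.support := fun i =>
    (c.mem_support_rotate_iff m hm).mp (d.getVert_mem_support i)
  have lower : ∀ i, G.Adj m (d.getVert i) → f (d.getVert i) < f m := fun i hadj =>
    lt_of_le_of_ne (hmax _ (List.mem_toFinset.mpr (hmem i))) (hne _ _ hadj).symm
  have hsnd := d.adj_snd hd.not_nil
  have hpen := (d.adj_penultimate hd.not_nil).symm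
  exact hd.snd_ne_penultimate (huniq m _ _ hsnd hpen (lower _ hsnd) (lower _ hpen))

theorem IsTree.exists_parent (hG : G.IsTree) :
    ∃ par : V → V, (∀ v, par v = v ∨ G.Adj (par v) v) ∧
      ∀ u v, G.Adj u v → u = par v ∨ v = par u := by
  classical
  obtain ⟨r⟩ := hG.connected.nonempty
  let P : ∀ v, G.Path r v := fun v => (hG.connected r v).some.toPath
  refine ⟨fun v => (P v : G.Walk r v).penultimate, fun v => ?_, fun u v huv => ?_⟩
  · by_cases hnil : (P v : G.Walk r v).Nil
    · left
      change (P v : G.Walk r v).getVert (_ - 1) = v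
      rw [hnil.length_eq_zero, Walk.getVert_zero]
      exact hnil.eq
    · exact Or.inr (Walk.adj_penultimate hnil)
  · by_cases hv : v ∈ (P u : G.Walk r u).support
    · exact Or.inr (hG.isAcyclic.eq_penultimate_of_adj_end (P u).2 huv hv)
    · exact Or.inl (hG.isAcyclic.eq_penultimate_of_adj_end (P v).2 huv.symm
        (hG.isAcyclic.mem_support_of_ne_mem_support_of_adj_of_isPath (P v).2 (P u).2 huv.symm hv))

theorem IsTree.treewidth_le_one [Finite V] (hG : G.IsTree) : treewidth G ≤ 1 := by
  classical
  obtain ⟨par, hpar, hedge⟩ := hG.exists_parent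
  have := Fintype.ofFinite V
  set e := Fintype.equivFin V
  set bag : Fin (Fintype.card V) → Finset V := fun i => {e.symm i, par (e.symm i)}
  have mem_bag : ∀ v, v ∈ bag (e v) := by simp [bag]
  have mem_bag_par : ∀ v, par v ∈ bag (e v) := by simp [bag]
  refine Nat.sInf_le ⟨_, G.comap e.symm, bag, ⟨(Iso.comap e.symm G).isTree_iff.mpr hG,
    fun v => ⟨e v, mem_bag v⟩, fun u v huv => ?_, fun v => ?_⟩, fun i => card_le_two⟩
  · rcases hedge u v huv with rfl | rfl
    · exact ⟨e v, mem_bag_par v, mem_bag v⟩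
    · exact ⟨e u, mem_bag u, mem_bag_par u⟩
  · rw [connected_iff_exists_forall_reachable]
    refine ⟨⟨e v, mem_bag v⟩, fun ⟨i, hi⟩ => ?_⟩
    obtain ⟨x, rfl⟩ := e.surjective i
    simp only [bag, Set.mem_ofPred_eq, Equiv.symm_apply_apply, mem_insert, mem_singleton] at hi
    rcases hi with rfl | rfl
    · rfl
    · rcases hpar x with hx | hx
      · simp only [hx]
        rfl
      · exact Adj.reachable (by simpa using hx)

theorem ordConnected_of_preconnected_induce_pathGraph {n : ℕ} {S : Set (Fin n)}
    (hS : ((pathGraph n).induce S).Preconnected) : S.OrdConnected := by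
  refine ⟨fun a ha b hb j hj => ?_⟩
  obtain ⟨p⟩ := hS ⟨a, ha⟩ ⟨b, hb⟩
  suffices ∀ {x y : S} (_ : ((pathGraph n).induce S).Walk x y) (j : Fin n),
      (x : Fin n) ≤ j → j ≤ y → j ∈ S from this p j hj.1 hj.2
  intro x y p
  induction p with
  | nil => exact fun j h₁ h₂ => le_antisymm h₂ h₁ ▸ Subtype.prop _
  | @cons x z y hxz _ ih =>
    intro j h₁ h₂
    rcases h₁.eq_or_lt with rfl | hlt
    · exact x.2
    · have : (z : Fin n) ≤ j := by
        have := pathGraph_adj.mp hxz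
        simp only [Function.Embedding.subtype_apply] at this
        rw [Fin.lt_def] at hlt
        rw [Fin.le_def]
        omega
      exact ih j this h₂

end SimpleGraph

theorem exists_le_le_of_two_lt_card {ι α : Type} [Fintype ι] [LinearOrder α]
    (hι : 2 < Fintype.card ι) (j : ι → α) :
    ∃ a m b, m ≠ a ∧ m ≠ b ∧ j a ≤ j m ∧ j m ≤ j b := by
  classical
  have : Nonempty ι := Fintype.card_pos_iff.mp (by omega)
  obtain ⟨a, ha⟩ := Finite.exists_min j
  obtain ⟨b, hb⟩ := Finite.exists_max j
  obtain ⟨m, -, hm⟩ := exists_mem_notMem_of_card_lt_card (s := {a, b}) (t := univ)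
    (card_le_two.trans_lt (by simpa using hι))
  simp only [mem_insert, mem_singleton, not_or] at hm
  exact ⟨a, m, b, hm.1, hm.2, ha m, hb m⟩

open SimpleGraph

section PathDecomposition

variable {V W : Type} {G : SimpleGraph V} {n : ℕ} {bag : Fin n → Finset V}

theorem IsTreeDecomp.ordConnected_setOf_mem_bag (hd : IsTreeDecomp G (pathGraph n) bag) (v : V) :
    {i | v ∈ bag i}.OrdConnected :=
  ordConnected_of_preconnected_induce_pathGraph (hd.2.2.2 v).preconnected

theorem IsTreeDecomp.ordConnected_setOf_bag_meets (hd : IsTreeDecomp G (pathGraph n) bag)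
    {S : Set V} (hS : (G.induce S).Preconnected) : {i | ∃ v ∈ S, v ∈ bag i}.OrdConnected := by
  refine ⟨fun i ⟨u, hu, hui⟩ k ⟨w, hw, hwk⟩ j hj => ?_⟩
  obtain ⟨p⟩ := hS ⟨u, hu⟩ ⟨w, hw⟩
  suffices ∀ {x y : S} (_ : (G.induce S).Walk x y) (i : Fin n), (x : V) ∈ bag i →
      (y : V) ∈ bag k → j ∈ Set.Icc i k → ∃ v ∈ S, v ∈ bag j from this p i hui hwk hj
  intro x y p
  induction p with
  | nil =>
    exact fun i hui hwk hj => ⟨_, Subtype.prop _, (hd.ordConnected_setOf_mem_bag _).out hui hwk hj⟩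
  | @cons x y z hxy _ ih =>
    intro i hui hwk hj
    obtain ⟨m, hxm, hym⟩ := hd.2.2.1 _ _ hxy
    by_cases hjm : j ≤ m
    · exact ⟨x, x.2, (hd.ordConnected_setOf_mem_bag _).out hui hxm ⟨hj.1, hjm⟩⟩
    · exact ih m hym hwk ⟨(not_le.mp hjm).le, hj.2⟩

theorem IsTreeDecomp.comap {H : SimpleGraph W} {T : SimpleGraph (Fin n)}
    (hd : IsTreeDecomp G T bag) (f : Copy H G) :
    IsTreeDecomp H T fun i => (bag i).preimage f f.injective.injOn := by
  obtain ⟨hT, hcover, hedge, hconn⟩ := hd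
  refine ⟨hT, fun w => ?_, fun a b hab => ?_, fun w => ?_⟩
  · obtain ⟨i, hi⟩ := hcover (f w)
    exact ⟨i, mem_preimage.mpr hi⟩
  · obtain ⟨i, hai, hbi⟩ := hedge _ _ (f.toHom.map_adj hab)
    exact ⟨i, mem_preimage.mpr hai, mem_preimage.mpr hbi⟩
  · have hbags : {i | w ∈ (bag i).preimage f f.injective.injOn} = {i | f w ∈ bag i} :=
      Set.ext fun _ => Finset.mem_preimage
    exact hbags ▸ hconn (f w)

theorem pathwidth_le_of_isTreeDecomp (hd : IsTreeDecomp G (pathGraph n) bag) {w : ℕ}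
    (hw : ∀ i, (bag i).card ≤ w + 1) : pathwidth G ≤ w :=
  Nat.sInf_le ⟨n, bag, hd, hw⟩

theorem IsTreeDecomp.exists_pathwidth_lt_card [Nonempty V]
    (hd : IsTreeDecomp G (pathGraph n) bag) : ∃ i, pathwidth G < (bag i).card := by
  obtain ⟨v⟩ := ‹Nonempty V›
  obtain ⟨i₀, hi₀⟩ := hd.2.1 v
  obtain ⟨i, -, hi⟩ := univ.exists_max_image (fun i => (bag i).card) ⟨i₀, mem_univ _⟩
  have hpos : 0 < (bag i).card := (card_pos.mpr ⟨v, hi₀⟩).trans_le (hi i₀ (mem_univ _))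
  have := pathwidth_le_of_isTreeDecomp hd (w := (bag i).card - 1) fun j => by
    have := hi j (mem_univ _)
    omega
  exact ⟨i, by omega⟩

theorem isTreeDecomp_univ [Fintype V] (G : SimpleGraph V) :
    IsTreeDecomp G (pathGraph 1) fun _ => univ := by
  refine ⟨.of_subsingleton, fun v => ⟨0, mem_univ v⟩, fun u v _ => ⟨0, mem_univ u, mem_univ v⟩,
    fun v => ?_⟩
  have : Nonempty {i : Fin 1 | v ∈ (univ : Finset V)} := ⟨⟨0, mem_univ v⟩⟩
  exact IsTree.of_subsingleton.connected

theorem exists_isTreeDecomp_pathwidth [Finite V] (G : SimpleGraph V) :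
    ∃ n bag, IsTreeDecomp G (pathGraph n) bag ∧ ∀ i, (bag i).card ≤ pathwidth G + 1 := by
  have := Fintype.ofFinite V
  have hne : ∃ w n bag, IsTreeDecomp G (pathGraph n) bag ∧ ∀ i, (bag i).card ≤ w + 1 :=
    ⟨Fintype.card V - 1, 1, _, isTreeDecomp_univ G, fun _ => by rw [card_univ]; omega⟩
  exact Nat.sInf_mem hne

theorem SimpleGraph.IsContained.pathwidth_le [Finite V] {H : SimpleGraph W} (h : H ⊑ G) :
    pathwidth H ≤ pathwidth G := by
  obtain ⟨f⟩ := h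
  obtain ⟨n, bag, hd, hw⟩ := exists_isTreeDecomp_pathwidth G
  exact pathwidth_le_of_isTreeDecomp (hd.comap f) fun i =>
    (card_le_card_of_injOn f (fun _ hx => mem_preimage.mp hx) f.injective.injOn).trans (hw i)

theorem pathwidth_add_one_le_of_copies [Finite V] [Nonempty W] {H : SimpleGraph W}
    {ι : Type} [Fintype ι] (hι : 2 < Fintype.card ι) (S : ι → Set V)
    (hS : Pairwise (Disjoint on S)) (hconn : ∀ i, (G.induce (S i)ᶜ).Preconnected)
    (f : ι → Copy H G) (hf : ∀ i w, f i w ∈ S i) : pathwidth H + 1 ≤ pathwidth G := by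
  classical
  obtain ⟨n, bag, hd, hw⟩ := exists_isTreeDecomp_pathwidth G
  choose j hj using fun i => (hd.comap (f i)).exists_pathwidth_lt_card
  obtain ⟨a, m, b, hma, hmb, hj₁, hj₂⟩ := exists_le_le_of_two_lt_card hι j
  have outside : ∀ i, i ≠ m → j i ∈ {k | ∃ v ∈ (S m)ᶜ, v ∈ bag k} := fun i him => by
    obtain ⟨w, hw⟩ := card_pos.mp ((Nat.zero_le _).trans_lt (hj i))
    exact ⟨f i w, Set.disjoint_left.mp (hS him) (hf i w), mem_preimage.mp hw⟩
  obtain ⟨y, hy, hym⟩ := (hd.ordConnected_setOf_bag_meets (hconn m)).out (outside a hma.symm)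
    (outside b hmb.symm) ⟨hj₁, hj₂⟩
  set A := ((bag (j m)).preimage (f m) (f m).injective.injOn).image (f m)
  have hyA : y ∉ A := by
    simp only [A, mem_image]
    rintro ⟨w, -, rfl⟩
    exact hy (hf m w)
  have hAy : insert y A ⊆ bag (j m) := insert_subset hym fun x hx => by
    obtain ⟨w, hw, rfl⟩ := mem_image.mp hx
    exact mem_preimage.mp hw
  refine Nat.le_of_succ_le_succ ?_
  calc pathwidth H + 1 + 1 ≤ (insert y A).card := by
        rw [card_insert_of_notMem hyA, card_image_of_injective (f := ⇑(f m)) _ (f m).injective]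
        exact Nat.succ_le_succ (hj m)
    _ ≤ (bag (j m)).card := card_le_card hAy
    _ ≤ pathwidth G + 1 := hw _

end PathDecomposition

namespace completeBinaryTree

variable {h h' : ℕ}

theorem adj_iff {a b : {l : List Bool // l.length ≤ h}} :
    (completeBinaryTree h).Adj a b ↔ (∃ x, b.1 = x :: a.1) ∨ ∃ x, a.1 = x :: b.1 := by
  refine ⟨fun hab => hab.2, fun hab => ⟨?_, hab⟩⟩
  rintro rfl
  rcases hab with ⟨x, hx⟩ | ⟨x, hx⟩ <;> simpa using congrArg List.length hx

instance : Finite {l : List Bool // l.length ≤ h} :=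
  (List.finite_length_le Bool h).to_subtype

def root : {l : List Bool // l.length ≤ h} := ⟨[], Nat.zero_le h⟩

instance : Nonempty {l : List Bool // l.length ≤ h} := ⟨root⟩

def parent (v : {l : List Bool // l.length ≤ h}) : {l : List Bool // l.length ≤ h} :=
  ⟨v.1.tail, by have := v.2; simp only [List.length_tail]; omega⟩

theorem connected_induce_of_parent_mem {s : Set {l : List Bool // l.length ≤ h}}
    (hroot : root ∈ s) (hs : ∀ v ∈ s, parent v ∈ s) :
    ((completeBinaryTree h).induce s).Connected := by
  rw [connected_iff_exists_forall_reachable]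
  refine ⟨⟨root, hroot⟩, fun ⟨⟨l, hl⟩, hv⟩ => ?_⟩
  induction l with
  | nil => rfl
  | cons x t ih =>
    have ht : t.length ≤ h := (Nat.le_succ _).trans hl
    have hadj : ((completeBinaryTree h).induce s).Adj ⟨⟨t, ht⟩, hs _ hv⟩ ⟨⟨x :: t, hl⟩, hv⟩ :=
      adj_iff.mpr (Or.inl ⟨x, rfl⟩)
    exact (ih ht (hs _ hv)).trans hadj.reachable

theorem isTree : (completeBinaryTree h).IsTree := by
  refine ⟨(induceUnivIso _).connected_iff.mp
    (connected_induce_of_parent_mem trivial fun _ _ => trivial),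
    isAcyclic_of_unique_lower_neighbor (fun v => v.1.length) (fun u v huv => ?_)
      (fun u v w huv huw hv hw => ?_)⟩
  · rcases adj_iff.mp huv with ⟨x, hx⟩ | ⟨x, hx⟩ <;> simp [hx]
  · rcases adj_iff.mp huv with ⟨x, hx⟩ | ⟨x, hx⟩
    · simp [hx] at hv
    rcases adj_iff.mp huw with ⟨y, hy⟩ | ⟨y, hy⟩
    · simp [hy] at hw
    exact Subtype.ext (List.cons.inj (hx.symm.trans hy)).2

-- Strings grow at their head, so the subtree rooted at `p` consists of the strings ending in `p`.
def subtree (p : List Bool) : Set {l : List Bool // l.length ≤ h} := {v | p <:+ v.1}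

theorem disjoint_subtree {p q : List Bool} (hpq : p.length = q.length) (hne : p ≠ q) :
    Disjoint (subtree (h := h) p) (subtree q) :=
  Set.disjoint_left.mpr fun _ hp hq =>
    hne ((List.suffix_of_suffix_length_le hp hq hpq.le).eq_of_length hpq)

theorem connected_induce_compl_subtree {p : List Bool} (hp : p ≠ []) :
    ((completeBinaryTree h).induce (subtree p)ᶜ).Connected :=
  connected_induce_of_parent_mem (fun hroot => hp (List.suffix_nil.mp hroot))
    fun _ hv hpar => hv (hpar.trans (List.tail_suffix _))

def copyAppend (p : List Bool) (hh : h + p.length ≤ h') :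
    Copy (completeBinaryTree h) (completeBinaryTree h') where
  toHom.toFun v := ⟨v.1 ++ p, by have := v.2; simp only [List.length_append]; omega⟩
  toHom.map_rel' hab := by
    rcases adj_iff.mp hab with ⟨x, hx⟩ | ⟨x, hx⟩
    · exact adj_iff.mpr (Or.inl ⟨x, by simp [hx]⟩)
    · exact adj_iff.mpr (Or.inr ⟨x, by simp [hx]⟩)
  injective' _ _ hab := Subtype.ext (List.append_left_injective p (congrArg Subtype.val hab))

theorem copyAppend_mem_subtree (p : List Bool) (hh : h + p.length ≤ h')
    (v : {l : List Bool // l.length ≤ h}) :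
    copyAppend p hh v ∈ subtree p :=
  List.suffix_append v.1 p

theorem pathwidth_mono (hh : h ≤ h') :
    pathwidth (completeBinaryTree h) ≤ pathwidth (completeBinaryTree h') :=
  (copyAppend [] (by simpa using hh)).isContained.pathwidth_le

theorem pathwidth_add_one_le :
    pathwidth (completeBinaryTree h) + 1 ≤ pathwidth (completeBinaryTree (h + 2)) :=
  pathwidth_add_one_le_of_copies (ι := List.Vector Bool 2) (by simp [card_vector])
    (fun p => subtree p.toList)
    (fun p q hpq => disjoint_subtree (by simp) fun he => hpq (List.Vector.eq _ _ he))
    (fun p => (connected_induce_compl_subtree (by simp [← List.length_pos_iff])).preconnected)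
    (fun p => copyAppend p.toList (by simp)) fun p => copyAppend_mem_subtree _ _

theorem half_le_pathwidth (h : ℕ) : h / 2 ≤ pathwidth (completeBinaryTree h) := by
  have double : ∀ k, k ≤ pathwidth (completeBinaryTree (2 * k)) := fun k => by
    induction k with
    | zero => exact Nat.zero_le _
    | succ k ih => exact (Nat.succ_le_succ ih).trans pathwidth_add_one_le
  exact (double (h / 2)).trans (pathwidth_mono (Nat.mul_div_le h 2))

end completeBinaryTree

/-- There is a sequence of finite simple graphs of uniformly bounded treewidth but unbounded
pathwidth: the complete binary trees `T_h` satisfy `tw(T_h) ≤ 1` for all `h`, while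
`pw(T_h) → ∞` as `h → ∞`. In particular, for every `c` there is a finite tree `T` with
`tw(T) ≤ 1` and `pw(T) > c`. -/
theorem bounded_treewidth_unbounded_pathwidth :
    (∀ h : ℕ, treewidth (completeBinaryTree h) ≤ 1) ∧
    Filter.Tendsto (fun h : ℕ => pathwidth (completeBinaryTree h)) Filter.atTop Filter.atTop ∧
    (∀ c : ℕ, ∃ (V : Type) (_ : Fintype V) (T : SimpleGraph V),
      T.IsTree ∧ treewidth T ≤ 1 ∧ c < pathwidth T) := by
  refine ⟨fun h => completeBinaryTree.isTree.treewidth_le_one,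
    Filter.tendsto_atTop_atTop.mpr fun b => ⟨2 * b, fun h hh => ?_⟩,
    fun c => ⟨_, Fintype.ofFinite _, completeBinaryTree (2 * (c + 1)),
      completeBinaryTree.isTree, completeBinaryTree.isTree.treewidth_le_one, ?_⟩⟩
  · exact le_trans (by omega) (completeBinaryTree.half_le_pathwidth h)
  · have := completeBinaryTree.half_le_pathwidth (2 * (c + 1))
    omega
end
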